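/- Let q = 2^m, g a primitive element of GF(q), and h a divisor of 2^{m/2} + 1 (m even, k = m/2). Then ∑_{x ∈ GF(q)} (-1)^{Tr_m(a x^h)} equals (h-1)·2^k if a = g^{hi} for some integer i, and equals -2^k otherwise, for any a ∈ GF(q)*. -/

import Mathlib

/-!
Let `K = {s | s ^ 2 ^ k = s}`, the subfield of order `2 ^ k`, and `ψ(y) = (-1)^Tr(y)`.
The trace vanishes on `K`, and for `c ∉ K` the identity
`Tr((c + c^{2^k}) w) = Tr(c (w + w^{2^k}))`, with `w + w^{2^k} ∈ K`, and nondegeneracy of the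
trace give `s ∈ K` with `ψ(c s) = -1`; hence `∑_{s ∈ K} ψ(c s)` is `2 ^ k` or `0` according as
`c ∈ K` or not.
As `h` divides `2^k + 1`, it is prime to `2^k - 1 = #K*`, so every `s ∈ K*` is an `h`-th power
and `S = ∑ₓ ψ(a xʰ)` does not change when `a` is replaced by `a s`. Averaging over `K*` gives
`(2^k - 1) S = 2^k #{x | a xʰ ∈ K} - 2^{2k}`. If `a = bʰ` the count is `1 + h (2^k - 1)`;
otherwise it is `1`, because the elements of `K*` are `(2^k + 1)`-th powers, hence `h`-th powers.
-/

open Finset Polynomial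

instance charP_two_of_algebra_zmod_two {F : Type*} [Field F] [Algebra (ZMod 2) F] : CharP F 2 :=
  charP_of_injective_algebraMap' (ZMod 2) 2

theorem Nat.coprime_two_pow_add_one_two_pow_sub_one {k : ℕ} (hk : 0 < k) :
    Nat.Coprime (2 ^ k + 1) (2 ^ k - 1) := by
  have h : 2 ^ k + 1 = 2 + (2 ^ k - 1) := by have := Nat.one_le_two_pow (n := k); omega
  rw [h, Nat.coprime_add_self_left, Nat.coprime_two_left, Nat.odd_sub Nat.one_le_two_pow]
  simp [Nat.even_pow, hk.ne']

theorem Nat.two_pow_two_mul_sub_one (k : ℕ) : 2 ^ (2 * k) - 1 = (2 ^ k + 1) * (2 ^ k - 1) := by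
  rw [pow_mul', ← one_pow 2, Nat.sq_sub_sq, one_pow]

theorem exists_pow_pow_eq_self_of_coprime {M : Type*} [Monoid M] {s : M} {n h : ℕ}
    (hs : s ^ n = 1) (hcop : h.Coprime n) : ∃ m, (s ^ m) ^ h = s := by
  obtain ⟨m, hm⟩ :=
    exists_pow_eq_self_of_coprime (hcop.coprime_dvd_right (orderOf_dvd_of_pow_eq_one hs))
  exact ⟨m, by rw [← pow_mul, mul_comm, pow_mul, hm]⟩

namespace FiniteField

noncomputable def traceSign (F : Type*) [Field F] [Algebra (ZMod 2) F] : AddChar F ℤ where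
  toFun y := if Algebra.trace (ZMod 2) F y = 0 then 1 else -1
  map_zero_eq_one' := by simp
  map_add_eq_mul' x y := by
    rw [map_add]
    generalize Algebra.trace (ZMod 2) F x = u
    generalize Algebra.trace (ZMod 2) F y = v
    revert u v
    decide

variable {F : Type*} [Field F] [Fintype F]

theorem exists_isPrimitiveRoot_card_sub_one :
    ∃ γ : F, IsPrimitiveRoot γ (Fintype.card F - 1) := by
  classical
  obtain ⟨γ, hγ⟩ := IsCyclic.exists_generator (α := Fˣ)
  refine ⟨γ, IsPrimitiveRoot.coe_units_iff.mpr ?_⟩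
  rw [IsPrimitiveRoot.iff_orderOf, orderOf_eq_card_of_forall_mem_zpowers hγ,
    Nat.card_eq_fintype_card, Fintype.card_units]

theorem card_nthRootsFinset_one_of_dvd {d : ℕ} (hd : d ∣ Fintype.card F - 1) :
    #(nthRootsFinset d (1 : F)) = d := by
  obtain ⟨γ, hγ⟩ := exists_isPrimitiveRoot_card_sub_one (F := F)
  obtain ⟨e, he⟩ := hd
  have hq : 0 < Fintype.card F - 1 := Nat.sub_pos_of_lt Fintype.one_lt_card
  exact (hγ.pow hq (by rw [he, mul_comm])).card_nthRootsFinset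

theorem exists_pow_eq_of_pow_eq_one {d e : ℕ} (hde : d * e = Fintype.card F - 1) {z : F}
    (hz : z ^ e = 1) : ∃ w : F, w ^ d = z := by
  obtain ⟨γ, hγ⟩ := exists_isPrimitiveRoot_card_sub_one (F := F)
  have hq : 0 < Fintype.card F - 1 := Nat.sub_pos_of_lt Fintype.one_lt_card
  have : NeZero (Fintype.card F - 1) := ⟨hq.ne'⟩
  have he : 0 < e := Nat.pos_of_ne_zero (by rintro rfl; omega)
  have hz0 : z ≠ 0 := by
    rintro rfl
    simp [he.ne'] at hz
  obtain ⟨i, -, rfl⟩ := hγ.eq_pow_of_pow_eq_one (pow_card_sub_one_eq_one z hz0)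
  rw [← pow_mul, hγ.pow_eq_one_iff_dvd, ← hde] at hz
  obtain ⟨j, rfl⟩ := Nat.dvd_of_mul_dvd_mul_right he hz
  exact ⟨γ ^ j, by rw [← pow_mul, mul_comm]⟩

theorem sum_comp_pow_mul_pow {M : Type*} [AddCommMonoid M] (f : F → M) (h : ℕ) {v : F}
    (hv : v ≠ 0) : ∑ x, f (x ^ h * v ^ h) = ∑ x, f (x ^ h) := by
  simp_rw [← mul_pow]
  exact Fintype.sum_equiv (Equiv.mulRight₀ v hv) _ _ fun _ => rfl

theorem pow_two_pow_pow_two_pow {k : ℕ} (hF : Fintype.card F = 2 ^ (2 * k)) (x : F) :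
    (x ^ 2 ^ k) ^ 2 ^ k = x := by
  rw [← pow_mul, ← pow_add, ← two_mul, ← hF, pow_card]

section CharTwo

variable [Algebra (ZMod 2) F] {k : ℕ}

theorem trace_pow_two_pow (x : F) (j : ℕ) :
    Algebra.trace (ZMod 2) F (x ^ 2 ^ j) = Algebra.trace (ZMod 2) F x := by
  have h := congrFun (coe_frobeniusAlgEquivOfAlgebraic_iterate (ZMod 2) F j) x
  rw [ZMod.card] at h
  rw [← h, ← AlgEquiv.coe_pow, Algebra.trace_eq_of_algEquiv]

theorem finrank_zmod_two_eq {m : ℕ} (hF : Fintype.card F = 2 ^ m) :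
    Module.finrank (ZMod 2) F = m := by
  rw [Module.card_eq_pow_finrank (K := ZMod 2), ZMod.card] at hF
  exact Nat.pow_right_injective le_rfl hF

theorem trace_eq_zero_of_pow_eq_self (hF : Fintype.card F = 2 ^ (2 * k)) {z : F}
    (hz : z ^ 2 ^ k = z) : Algebra.trace (ZMod 2) F z = 0 := by
  apply (algebraMap (ZMod 2) F).injective
  have hperiod (i : ℕ) : z ^ 2 ^ (k + i) = z ^ 2 ^ i := by rw [pow_add, pow_mul, hz]
  rw [algebraMap_trace_eq_sum_pow, finrank_zmod_two_eq hF, Nat.card_zmod, two_mul,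
    sum_range_add]
  simp only [hperiod, CharTwo.add_self_eq_zero, map_zero]

theorem exists_trace_mul_ne_zero {c : F} (hc : c ≠ 0) :
    ∃ b, Algebra.trace (ZMod 2) F (c * b) ≠ 0 := by
  have := (traceForm_nondegenerate (ZMod 2) F).1 c
  simp_rw [Algebra.traceForm_apply] at this
  by_contra! h
  exact hc (this h)

end CharTwo

variable [DecidableEq F]

variable (F) in
def fixedPointsPow (n : ℕ) : Finset F := {s | s ^ n = s}

variable {n : ℕ}

@[simp]
theorem mem_fixedPointsPow {s : F} : s ∈ fixedPointsPow F n ↔ s ^ n = s := by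
  simp [fixedPointsPow]

theorem pow_mem_fixedPointsPow_iff (hn : 1 ≤ n) {e : ℕ} {y : F} (hy : y ≠ 0) :
    y ^ e ∈ fixedPointsPow F n ↔ y ^ (e * (n - 1)) = 1 := by
  have hsplit : (y ^ e) ^ n = y ^ (e * (n - 1)) * y ^ e := by
    rw [← pow_mul, ← pow_add, ← Nat.mul_add_one, Nat.sub_add_cancel hn]
  rw [mem_fixedPointsPow, hsplit, mul_eq_right₀ (pow_ne_zero e hy)]

theorem card_filter_pow_mem_fixedPointsPow {e : ℕ} (hpos : 0 < e * (n - 1))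
    (hdvd : e * (n - 1) ∣ Fintype.card F - 1) :
    #{y : F | y ^ e ∈ fixedPointsPow F n} = e * (n - 1) + 1 := by
  have hn : 1 ≤ n := by have := Nat.pos_of_mul_pos_left hpos; omega
  have hset : ({y : F | y ^ e ∈ fixedPointsPow F n} : Finset F)
      = insert 0 (nthRootsFinset (e * (n - 1)) (1 : F)) := by
    ext y
    rcases eq_or_ne y 0 with rfl | hy
    · simp [zero_pow_eq, Nat.one_le_iff_ne_zero.mp hn]
    · rw [mem_filter_univ, pow_mem_fixedPointsPow_iff hn hy, mem_insert,
        mem_nthRootsFinset hpos, or_iff_right hy]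
  rw [hset, card_insert_of_notMem (by simp [mem_nthRootsFinset hpos, hpos.ne']),
    card_nthRootsFinset_one_of_dvd hdvd]

theorem card_fixedPointsPow_two_pow {k : ℕ} (hF : Fintype.card F = 2 ^ (2 * k)) (hk : 0 < k) :
    #(fixedPointsPow F (2 ^ k)) = 2 ^ k := by
  have h := card_filter_pow_mem_fixedPointsPow (F := F) (n := 2 ^ k) (e := 1)
    (by simpa using Nat.one_lt_two_pow hk.ne')
    (by rw [hF, Nat.two_pow_two_mul_sub_one, one_mul]; exact dvd_mul_left _ _)
  have hset : ({y : F | y ^ 1 ∈ fixedPointsPow F (2 ^ k)} : Finset F)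
      = fixedPointsPow F (2 ^ k) := by
    ext
    simp
  rwa [hset, one_mul, Nat.sub_add_cancel Nat.one_le_two_pow] at h

theorem card_filter_pow_mul_pow_mem_fixedPointsPow {k : ℕ} (hF : Fintype.card F = 2 ^ (2 * k))
    (hk : 0 < k) {h : ℕ} (hh : h ∣ 2 ^ k + 1) {b : F} (hb : b ≠ 0) :
    #{x | b ^ h * x ^ h ∈ fixedPointsPow F (2 ^ k)} = h * (2 ^ k - 1) + 1 := by
  have hpos : 0 < h * (2 ^ k - 1) :=
    Nat.mul_pos (Nat.pos_of_dvd_of_pos hh (by positivity))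
      (Nat.sub_pos_of_lt (Nat.one_lt_two_pow hk.ne'))
  have hdvd : h * (2 ^ k - 1) ∣ Fintype.card F - 1 := by
    rw [hF, Nat.two_pow_two_mul_sub_one]
    exact mul_dvd_mul_right hh _
  rw [← card_filter_pow_mem_fixedPointsPow hpos hdvd]
  simp_rw [← mul_pow]
  exact card_equiv (Equiv.mulLeft₀ b hb) fun x => by simp

theorem filter_mul_pow_mem_fixedPointsPow_eq_singleton {k : ℕ}
    (hF : Fintype.card F = 2 ^ (2 * k)) {h : ℕ} (hh : h ∣ 2 ^ k + 1) {a : F} (ha : a ≠ 0)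
    (hna : ∀ b : F, b ^ h ≠ a) :
    ({x | a * x ^ h ∈ fixedPointsPow F (2 ^ k)} : Finset F) = {0} := by
  have hh0 : h ≠ 0 := by rintro rfl; simp at hh
  ext x
  simp only [mem_filter_univ, mem_singleton]
  refine ⟨fun hx => by_contra fun hx0 => ?_, by rintro rfl; simp [hh0]⟩
  rw [← pow_one (a * x ^ h),
    pow_mem_fixedPointsPow_iff Nat.one_le_two_pow (mul_ne_zero ha (pow_ne_zero h hx0)),
    one_mul] at hx
  obtain ⟨w, hw⟩ := exists_pow_eq_of_pow_eq_one (by rw [hF, Nat.two_pow_two_mul_sub_one]) hx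
  obtain ⟨t, ht⟩ := hh
  refine hna (w ^ t / x) ?_
  rw [div_pow, ← pow_mul', ← ht, hw, mul_div_cancel_right₀ _ (pow_ne_zero h hx0)]

section CharTwo

variable [Algebra (ZMod 2) F] {k : ℕ}

theorem exists_mem_fixedPointsPow_trace_mul_ne_zero (hF : Fintype.card F = 2 ^ (2 * k)) {c : F}
    (hc : c ∉ fixedPointsPow F (2 ^ k)) :
    ∃ s ∈ fixedPointsPow F (2 ^ k), Algebra.trace (ZMod 2) F (c * s) ≠ 0 := by
  rw [mem_fixedPointsPow] at hc
  have hsum : c + c ^ 2 ^ k ≠ 0 := by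
    rw [Ne, add_eq_zero_iff_eq_neg, CharTwo.neg_eq]
    exact Ne.symm hc
  obtain ⟨w, hw⟩ := exists_trace_mul_ne_zero hsum
  refine ⟨w + w ^ 2 ^ k, ?_, ?_⟩
  · rw [mem_fixedPointsPow, add_pow_char_pow, pow_two_pow_pow_two_pow hF, add_comm]
  · have hswap : Algebra.trace (ZMod 2) F (c * w ^ 2 ^ k)
        = Algebra.trace (ZMod 2) F (c ^ 2 ^ k * w) := by
      rw [← trace_pow_two_pow _ k, mul_pow, pow_two_pow_pow_two_pow hF]
    rwa [mul_add, map_add, hswap, ← map_add, ← add_mul]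

theorem sum_traceSign_mul_fixedPointsPow (hF : Fintype.card F = 2 ^ (2 * k)) (hk : 0 < k)
    (c : F) :
    ∑ s ∈ fixedPointsPow F (2 ^ k), traceSign F (c * s)
      = if c ∈ fixedPointsPow F (2 ^ k) then 2 ^ k else 0 := by
  split_ifs with hc
  · have hone : ∀ s ∈ fixedPointsPow F (2 ^ k), traceSign F (c * s) = 1 := fun s hs => by
      rw [mem_fixedPointsPow] at hc hs
      exact if_pos (trace_eq_zero_of_pow_eq_self hF (by rw [mul_pow, hc, hs]))
    rw [sum_congr rfl hone, sum_const, card_fixedPointsPow_two_pow hF hk, nsmul_one]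
    push_cast; rfl
  · obtain ⟨s₀, hs₀, htr⟩ := exists_mem_fixedPointsPow_trace_mul_ne_zero hF hc
    have hshift : ∑ s ∈ fixedPointsPow F (2 ^ k), traceSign F (c * (s + s₀))
        = ∑ s ∈ fixedPointsPow F (2 ^ k), traceSign F (c * s) := by
      refine sum_equiv (Equiv.addRight s₀) (fun s => ?_) fun _ _ => rfl
      rw [mem_fixedPointsPow] at hs₀
      simp [add_pow_char_pow, hs₀]
    have hsign : traceSign F (c * s₀) = -1 := if_neg htr
    simp_rw [mul_add, AddChar.map_add_eq_mul, ← sum_mul, hsign] at hshift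
    linarith

theorem mul_sum_traceSign_mul_pow (hF : Fintype.card F = 2 ^ (2 * k)) (hk : 0 < k) {h : ℕ}
    (hh : h.Coprime (2 ^ k - 1)) (a : F) :
    ((2 : ℤ) ^ k - 1) * ∑ x, traceSign F (a * x ^ h)
      = 2 ^ k * #{x | a * x ^ h ∈ fixedPointsPow F (2 ^ k)} - 2 ^ (2 * k) := by
  set K := fixedPointsPow F (2 ^ k)
  have hcard : #(K.erase 0) = 2 ^ k - 1 := by
    rw [card_erase_of_mem (by simp [K]), card_fixedPointsPow_two_pow hF hk]
  have havg : ∀ s ∈ K.erase 0,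
      ∑ x, traceSign F (a * x ^ h * s) = ∑ x, traceSign F (a * x ^ h) := by
    intro s hs
    obtain ⟨hs0, hsK⟩ := mem_erase.mp hs
    rw [← pow_one s, pow_mem_fixedPointsPow_iff Nat.one_le_two_pow hs0, one_mul] at hsK
    obtain ⟨m, hm⟩ := exists_pow_pow_eq_self_of_coprime hsK hh
    rw [← hm]
    simp_rw [mul_assoc]
    exact sum_comp_pow_mul_pow (fun y => traceSign F (a * y)) h (pow_ne_zero m hs0)
  calc ((2 : ℤ) ^ k - 1) * ∑ x, traceSign F (a * x ^ h)
      = ∑ s ∈ K.erase 0, ∑ x, traceSign F (a * x ^ h) := by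
        rw [sum_const, hcard, nsmul_eq_mul, Nat.cast_sub Nat.one_le_two_pow]
        push_cast; rfl
    _ = ∑ x, ∑ s ∈ K.erase 0, traceSign F (a * x ^ h * s) :=
        (sum_congr rfl havg).symm.trans sum_comm
    _ = ∑ x, ((if a * x ^ h ∈ K then (2 : ℤ) ^ k else 0) - 1) := by
        refine sum_congr rfl fun x _ => ?_
        rw [← sum_traceSign_mul_fixedPointsPow hF hk,
          ← add_sum_erase K _ (show (0 : F) ∈ K by simp [K]), mul_zero, AddChar.map_zero_eq_one]
        ring
    _ = 2 ^ k * #{x | a * x ^ h ∈ K} - 2 ^ (2 * k) := by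
        rw [sum_sub_distrib, sum_ite, sum_const_zero, sum_const, sum_const, card_univ, hF]
        ring

theorem sum_traceSign_mul_pow_of_eq_pow (hF : Fintype.card F = 2 ^ (2 * k)) (hk : 0 < k) {h : ℕ}
    (hh : h ∣ 2 ^ k + 1) {b : F} (hb : b ≠ 0) :
    ∑ x, traceSign F (b ^ h * x ^ h) = ((h : ℤ) - 1) * 2 ^ k := by
  have hcop := Nat.Coprime.coprime_dvd_left hh (Nat.coprime_two_pow_add_one_two_pow_sub_one hk)
  have key := mul_sum_traceSign_mul_pow hF hk hcop (b ^ h)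
  rw [card_filter_pow_mul_pow_mem_fixedPointsPow hF hk hh hb] at key
  refine mul_left_cancel₀ (sub_ne_zero.mpr (one_lt_pow₀ one_lt_two hk.ne').ne') ?_
  rw [key]
  push_cast [Nat.cast_sub Nat.one_le_two_pow]
  ring

theorem sum_traceSign_mul_pow_of_forall_pow_ne (hF : Fintype.card F = 2 ^ (2 * k)) (hk : 0 < k)
    {h : ℕ} (hh : h ∣ 2 ^ k + 1) {a : F} (ha : a ≠ 0) (hna : ∀ b : F, b ^ h ≠ a) :
    ∑ x, traceSign F (a * x ^ h) = -2 ^ k := by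
  have hcop := Nat.Coprime.coprime_dvd_left hh (Nat.coprime_two_pow_add_one_two_pow_sub_one hk)
  have key := mul_sum_traceSign_mul_pow hF hk hcop a
  rw [filter_mul_pow_mem_fixedPointsPow_eq_singleton hF hh ha hna, card_singleton] at key
  refine mul_left_cancel₀ (sub_ne_zero.mpr (one_lt_pow₀ one_lt_two hk.ne').ne') ?_
  rw [key]
  ring

end CharTwo

end FiniteField

open FiniteField

theorem exp_sum_power_residue (m k : ℕ) (hm : m = 2 * k) (hk0 : 0 < k)
    (F : Type) [Field F] [Fintype F] [Algebra (ZMod 2) F]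
    (hF : Fintype.card F = 2 ^ m)
    (g : F) (hg : ∀ x : F, x ≠ 0 → ∃ n : ℕ, x = g ^ n)
    (h : ℕ) (hh : h ∣ 2 ^ k + 1) (a : F) (ha : a ≠ 0) :
    ((∃ i : ℕ, a = g ^ (h * i)) →
      ∑ x : F, (if Algebra.trace (ZMod 2) F (a * x ^ h) = 0 then (1 : ℤ) else -1)
        = ((h : ℤ) - 1) * 2 ^ k) ∧
    ((¬ ∃ i : ℕ, a = g ^ (h * i)) →
      ∑ x : F, (if Algebra.trace (ZMod 2) F (a * x ^ h) = 0 then (1 : ℤ) else -1)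
        = -(2 ^ k)) := by
  classical
  subst hm
  have hh0 : h ≠ 0 := by rintro rfl; simp at hh
  refine ⟨fun ⟨i, hi⟩ => ?_, fun hres => ?_⟩
  · rw [pow_mul'] at hi
    subst hi
    exact sum_traceSign_mul_pow_of_eq_pow hF hk0 hh (ne_zero_pow hh0 ha)
  · refine sum_traceSign_mul_pow_of_forall_pow_ne hF hk0 hh ha fun b hb => ?_
    obtain ⟨n, rfl⟩ := hg b (ne_zero_pow hh0 (hb ▸ ha))
    exact hres ⟨n, by rw [← hb, pow_mul']⟩
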